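/- (Hardy–Littlewood rearrangement upper bound) Let X be a random variable and μ a probability distribution on ℝ. Then sup over all random variables Y with distribution μ of E[XY] equals ∫_0^1 Q_X(p) Q_μ(p) dp, provided the relevant integrals are well-defined, and the supremum is attained by any Y ~ μ comonotonic with X. -/

import Mathlib

/-!
Write `x = ∫ (𝟙{s < x} - 𝟙{s < 0}) ds`. By Fubini, `E[XY]` is the integral over `(s, t)` of
`P(X > s, Y > t)` plus terms that only depend on the laws of `X` and `Y`. Since
`P(X > s, Y > t) ≤ min (P(X > s)) (P(Y > t))`, with equality when `X` and `Y` are comonotonic,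
among all pairs with given marginals the comonotonic ones maximise `E[XY]`, and they all give the
same value. For `U` uniform on `(0, 1)` the pair `(Q_X(U), Q_μ(U))` is such a comonotonic pair,
and its `E[XY]` is the quantile integral.
-/

open MeasureTheory Set Filter Topology

/-- Right-continuous quantile function of a random variable `X` under `P`. -/
noncomputable def quantile {Ω : Type*} [MeasurableSpace Ω] (P : Measure Ω) (X : Ω → ℝ)
    (p : ℝ) : ℝ :=
  sInf {z : ℝ | p < (P {ω | X ω ≤ z}).toReal}

/-- Quantile function of a probability distribution `μ` on `ℝ`. -/
noncomputable def quantileM (μ : Measure ℝ) (p : ℝ) : ℝ := quantile μ id p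

/-- `X` and `Y` are comonotonic: `(X(ω)−X(ω'))·(Y(ω)−Y(ω')) ≥ 0` for a.e. pair. -/
def Comonotone {Ω : Type*} [MeasurableSpace Ω] (P : Measure Ω) (X Y : Ω → ℝ) : Prop :=
  ∀ᵐ ω ∂P, ∀ᵐ ω' ∂P, 0 ≤ (X ω - X ω') * (Y ω - Y ω')

open ProbabilityTheory

noncomputable def layer (x s : ℝ) : ℝ := (Iio x).indicator 1 s - (Iio (0 : ℝ)).indicator 1 s

section Layer

lemma layer_of_nonneg {x : ℝ} (hx : 0 ≤ x) : layer x = (Ico 0 x).indicator 1 := by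
  ext s
  simp only [layer, indicator_apply, mem_Iio, mem_Ico, Pi.one_apply]
  split_ifs <;> grind

lemma layer_of_nonpos {x : ℝ} (hx : x ≤ 0) : layer x = -(Ico x 0).indicator 1 := by
  ext s
  simp only [layer, indicator_apply, mem_Iio, mem_Ico, Pi.one_apply, Pi.neg_apply]
  split_ifs <;> grind

lemma integrable_indicator_one_Ico (a b : ℝ) : Integrable ((Ico a b).indicator (1 : ℝ → ℝ)) :=
  (integrableOn_const (by simp)).integrable_indicator measurableSet_Ico

lemma integrable_layer (x : ℝ) : Integrable (layer x) := by
  rcases le_total 0 x with hx | hx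
  · rw [layer_of_nonneg hx]
    exact integrable_indicator_one_Ico 0 x
  · rw [layer_of_nonpos hx]
    exact (integrable_indicator_one_Ico x 0).neg

lemma integral_layer (x : ℝ) : ∫ s, layer x s = x := by
  rcases le_total 0 x with hx | hx
  · rw [layer_of_nonneg hx, integral_indicator_one measurableSet_Ico,
      Real.volume_real_Ico_of_le hx, sub_zero]
  · rw [layer_of_nonpos hx, integral_neg', integral_indicator_one measurableSet_Ico,
      Real.volume_real_Ico_of_le hx]
    ring

lemma layer_nonneg {x : ℝ} (hx : 0 ≤ x) (s : ℝ) : 0 ≤ layer x s := by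
  rw [layer_of_nonneg hx]
  exact indicator_nonneg (fun _ _ => zero_le_one) s

lemma layer_nonpos {x : ℝ} (hx : x ≤ 0) (s : ℝ) : layer x s ≤ 0 := by
  rw [layer_of_nonpos hx]
  exact neg_nonpos.2 (indicator_nonneg (fun _ _ => zero_le_one) s)

lemma integral_abs_layer (x : ℝ) : ∫ s, |layer x s| = |x| := by
  rcases le_total 0 x with hx | hx
  · simp_rw [abs_of_nonneg (layer_nonneg hx _), abs_of_nonneg hx, integral_layer]
  · simp_rw [abs_of_nonpos (layer_nonpos hx _), abs_of_nonpos hx, integral_neg, integral_layer]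

lemma measurable_layer : Measurable (Function.uncurry layer) :=
  (measurable_const.indicator (measurableSet_lt measurable_snd measurable_fst)).sub
    ((measurable_const.indicator measurableSet_Iio).comp measurable_snd)

lemma layer_eq_indicator_preimage {Ω : Type*} (X : Ω → ℝ) (ω : Ω) (s : ℝ) :
    layer (X ω) s = (X ⁻¹' Ioi s).indicator 1 ω - (Iio (0 : ℝ)).indicator 1 s :=
  rfl

end Layer

section Coupling

variable {Ω : Type*} [MeasurableSpace Ω] {P : Measure Ω} {X Y : Ω → ℝ}

lemma integrable_layer_mul_layer [SFinite P] (hX : Measurable X) (hY : Measurable Y)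
    (hXY : Integrable (fun ω => X ω * Y ω) P) :
    Integrable (fun z : Ω × (ℝ × ℝ) => layer (X z.1) z.2.1 * layer (Y z.1) z.2.2)
      (P.prod (volume.prod volume)) := by
  have hmeas : Measurable fun z : Ω × (ℝ × ℝ) => layer (X z.1) z.2.1 * layer (Y z.1) z.2.2 :=
    (measurable_layer.comp ((hX.comp measurable_fst).prodMk measurable_snd.fst)).mul
      (measurable_layer.comp ((hY.comp measurable_fst).prodMk measurable_snd.snd))
  rw [integrable_prod_iff hmeas.aestronglyMeasurable]
  constructor
  · exact Eventually.of_forall fun ω => (integrable_layer (X ω)).mul_prod (integrable_layer (Y ω))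
  · refine hXY.norm.congr (Eventually.of_forall fun ω => ?_)
    simp only [norm_mul, Real.norm_eq_abs]
    rw [integral_prod_mul (fun s => |layer (X ω) s|) (fun t => |layer (Y ω) t|),
      integral_abs_layer, integral_abs_layer]

lemma integral_mul_eq_integral_layer_mul_layer [SFinite P] (hX : Measurable X)
    (hY : Measurable Y) (hXY : Integrable (fun ω => X ω * Y ω) P) :
    ∫ ω, X ω * Y ω ∂P =
      ∫ q : ℝ × ℝ, ∫ ω, layer (X ω) q.1 * layer (Y ω) q.2 ∂P ∂(volume.prod volume) := by
  calc ∫ ω, X ω * Y ω ∂P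
      = ∫ ω, ∫ q : ℝ × ℝ, layer (X ω) q.1 * layer (Y ω) q.2 ∂(volume.prod volume) ∂P := by
        congr 1 with ω
        rw [integral_prod_mul (layer (X ω)) (layer (Y ω)), integral_layer, integral_layer]
    _ = _ := integral_integral_swap (integrable_layer_mul_layer hX hY hXY)

lemma integral_indicator_sub_mul_indicator_sub [IsFiniteMeasure P] {A B : Set Ω}
    (hA : MeasurableSet A) (hB : MeasurableSet B) (a b : ℝ) :
    ∫ ω, (A.indicator 1 ω - a) * (B.indicator 1 ω - b) ∂P
      = P.real (A ∩ B) - b * P.real A - a * P.real B + a * b * P.real univ := by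
  have hA' : Integrable (A.indicator (1 : Ω → ℝ)) P := (integrable_const 1).indicator hA
  have hB' : Integrable (B.indicator (1 : Ω → ℝ)) P := (integrable_const 1).indicator hB
  have hAB : Integrable ((A ∩ B).indicator (1 : Ω → ℝ)) P :=
    (integrable_const 1).indicator (hA.inter hB)
  have hexpand : ∀ ω, (A.indicator 1 ω - a) * (B.indicator 1 ω - b) =
      (A ∩ B).indicator 1 ω - b * A.indicator 1 ω - a * B.indicator 1 ω + a * b := by
    intro ω
    rw [inter_indicator_one, Pi.mul_apply]
    ring
  simp_rw [hexpand]
  rw [integral_add _ (integrable_const _), integral_sub, integral_sub, integral_const_mul,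
    integral_const_mul, integral_indicator_one hA, integral_indicator_one hB,
    integral_indicator_one (hA.inter hB), integral_const, smul_eq_mul]
  · ring
  exacts [hAB, hA'.const_mul b, hAB.sub (hA'.const_mul b), hB'.const_mul a,
    (hAB.sub (hA'.const_mul b)).sub (hB'.const_mul a)]

lemma Comonotone.measure_sdiff_eq_zero_or (h : Comonotone P X Y) (s t : ℝ) :
    P (X ⁻¹' Ioi s \ Y ⁻¹' Ioi t) = 0 ∨ P (Y ⁻¹' Ioi t \ X ⁻¹' Ioi s) = 0 := by
  -- a point of each difference set would form a discordant pair
  by_contra! hpos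
  obtain ⟨ω, ⟨hXω, hYω⟩, hω⟩ := ((frequently_ae_mem_iff.2 hpos.1).and_eventually h).exists
  obtain ⟨ω', ⟨hYω', hXω'⟩, hω'⟩ := ((frequently_ae_mem_iff.2 hpos.2).and_eventually hω).exists
  simp only [mem_preimage, mem_Ioi, not_lt] at hXω hYω hXω' hYω'
  nlinarith

lemma measureReal_inter_eq_min [IsFiniteMeasure P] {A B : Set Ω} (hA : MeasurableSet A)
    (hB : MeasurableSet B) (h : P (A \ B) = 0 ∨ P (B \ A) = 0) :
    P.real (A ∩ B) = min (P.real A) (P.real B) := by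
  have key : ∀ {A B : Set Ω}, MeasurableSet B → P (A \ B) = 0 →
      P.real (A ∩ B) = min (P.real A) (P.real B) := by
    intro A B hB h0
    have hinter : P.real (A ∩ B) = P.real A := by
      rw [← measureReal_inter_add_sdiff (s := A) hB, (measureReal_eq_zero_iff).2 h0, add_zero]
    rw [hinter, min_eq_left (hinter ▸ measureReal_mono inter_subset_right)]
  rcases h with h0 | h0
  · exact key hB h0
  · rw [inter_comm, min_comm]
    exact key hA h0

lemma Comonotone.measureReal_inter [IsFiniteMeasure P] (h : Comonotone P X Y)
    (hX : Measurable X) (hY : Measurable Y) (s t : ℝ) :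
    P.real (X ⁻¹' Ioi s ∩ Y ⁻¹' Ioi t) = min (P.real (X ⁻¹' Ioi s)) (P.real (Y ⁻¹' Ioi t)) :=
  measureReal_inter_eq_min (hX measurableSet_Ioi) (hY measurableSet_Ioi)
    (h.measure_sdiff_eq_zero_or s t)

end Coupling

section Comparison

variable {Ω Ω' : Type*} [MeasurableSpace Ω] [MeasurableSpace Ω'] {P : Measure Ω}
  {P' : Measure Ω'} {X Y : Ω → ℝ} {X' Y' : Ω' → ℝ}

lemma measureReal_preimage_eq_of_map_eq (hX : Measurable X) (hX' : Measurable X')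
    (h : P.map X = P'.map X') {s : Set ℝ} (hs : MeasurableSet s) :
    P.real (X ⁻¹' s) = P'.real (X' ⁻¹' s) := by
  rw [← map_measureReal_apply hX hs, h, map_measureReal_apply hX' hs]

lemma integral_layer_mul_layer_sub_measureReal_inter [IsFiniteMeasure P] [IsFiniteMeasure P']
    (hX : Measurable X) (hY : Measurable Y) (hX' : Measurable X') (hY' : Measurable Y')
    (hXX' : P.map X = P'.map X') (hYY' : P.map Y = P'.map Y') (s t : ℝ) :
    ∫ ω, layer (X ω) s * layer (Y ω) t ∂P - P.real (X ⁻¹' Ioi s ∩ Y ⁻¹' Ioi t) =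
      ∫ ω, layer (X' ω) s * layer (Y' ω) t ∂P' - P'.real (X' ⁻¹' Ioi s ∩ Y' ⁻¹' Ioi t) := by
  have huniv : P.real univ = P'.real univ := by
    simpa using measureReal_preimage_eq_of_map_eq hX hX' hXX' MeasurableSet.univ
  simp only [layer_eq_indicator_preimage]
  rw [integral_indicator_sub_mul_indicator_sub (hX measurableSet_Ioi) (hY measurableSet_Ioi),
    integral_indicator_sub_mul_indicator_sub (hX' measurableSet_Ioi) (hY' measurableSet_Ioi),
    measureReal_preimage_eq_of_map_eq hX hX' hXX' measurableSet_Ioi,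
    measureReal_preimage_eq_of_map_eq hY hY' hYY' measurableSet_Ioi, huniv]
  ring

theorem integral_mul_le_of_comonotone [IsFiniteMeasure P] [IsFiniteMeasure P']
    (hX : Measurable X) (hY : Measurable Y) (hX' : Measurable X') (hY' : Measurable Y')
    (hXX' : P.map X = P'.map X') (hYY' : P.map Y = P'.map Y') (hco' : Comonotone P' X' Y')
    (hXY : Integrable (fun ω => X ω * Y ω) P) (hXY' : Integrable (fun ω => X' ω * Y' ω) P') :
    ∫ ω, X ω * Y ω ∂P ≤ ∫ ω, X' ω * Y' ω ∂P' := by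
  rw [integral_mul_eq_integral_layer_mul_layer hX hY hXY,
    integral_mul_eq_integral_layer_mul_layer hX' hY' hXY']
  refine integral_mono (integrable_layer_mul_layer hX hY hXY).integral_prod_right
    (integrable_layer_mul_layer hX' hY' hXY').integral_prod_right fun q => ?_
  have hinter : P.real (X ⁻¹' Ioi q.1 ∩ Y ⁻¹' Ioi q.2) ≤
      P'.real (X' ⁻¹' Ioi q.1 ∩ Y' ⁻¹' Ioi q.2) := by
    rw [hco'.measureReal_inter hX' hY',
      ← measureReal_preimage_eq_of_map_eq hX hX' hXX' measurableSet_Ioi,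
      ← measureReal_preimage_eq_of_map_eq hY hY' hYY' measurableSet_Ioi]
    exact le_min (measureReal_mono inter_subset_left) (measureReal_mono inter_subset_right)
  linarith [integral_layer_mul_layer_sub_measureReal_inter hX hY hX' hY' hXX' hYY' q.1 q.2]

theorem integral_mul_eq_of_comonotone [IsFiniteMeasure P] [IsFiniteMeasure P']
    (hX : Measurable X) (hY : Measurable Y) (hX' : Measurable X') (hY' : Measurable Y')
    (hXX' : P.map X = P'.map X') (hYY' : P.map Y = P'.map Y') (hco : Comonotone P X Y)
    (hco' : Comonotone P' X' Y') (hXY : Integrable (fun ω => X ω * Y ω) P)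
    (hXY' : Integrable (fun ω => X' ω * Y' ω) P') :
    ∫ ω, X ω * Y ω ∂P = ∫ ω, X' ω * Y' ω ∂P' := by
  rw [integral_mul_eq_integral_layer_mul_layer hX hY hXY,
    integral_mul_eq_integral_layer_mul_layer hX' hY' hXY']
  congr 1 with q
  have hinter : P.real (X ⁻¹' Ioi q.1 ∩ Y ⁻¹' Ioi q.2) =
      P'.real (X' ⁻¹' Ioi q.1 ∩ Y' ⁻¹' Ioi q.2) := by
    rw [hco.measureReal_inter hX hY, hco'.measureReal_inter hX' hY',
      measureReal_preimage_eq_of_map_eq hX hX' hXX' measurableSet_Ioi,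
      measureReal_preimage_eq_of_map_eq hY hY' hYY' measurableSet_Ioi]
  linarith [integral_layer_mul_layer_sub_measureReal_inter hX hY hX' hY' hXX' hYY' q.1 q.2]

end Comparison

lemma Monotone.comonotone {Ω : Type*} [MeasurableSpace Ω] [LinearOrder Ω] (P : Measure Ω)
    {f g : Ω → ℝ} (hf : Monotone f) (hg : Monotone g) : Comonotone P f g :=
  Eventually.of_forall fun a => Eventually.of_forall fun b => by
    rcases le_total a b with h | h
    · exact mul_nonneg_of_nonpos_of_nonpos (sub_nonpos.2 (hf h)) (sub_nonpos.2 (hg h))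
    · exact mul_nonneg (sub_nonneg.2 (hf h)) (sub_nonneg.2 (hg h))

lemma bddBelow_setOf_lt_cdf (μ : Measure ℝ) {p : ℝ} (hp : 0 < p) :
    BddBelow {z | p < cdf μ z} := by
  obtain ⟨a, ha⟩ := eventually_atBot.1 ((tendsto_cdf_atBot μ).eventually (gt_mem_nhds hp))
  exact ⟨a, fun z hz => le_of_not_gt fun hza => (ha z hza.le).not_gt hz⟩

lemma nonempty_setOf_lt_cdf (μ : Measure ℝ) {p : ℝ} (hp : p < 1) :
    {z | p < cdf μ z}.Nonempty :=
  ((tendsto_cdf_atTop μ).eventually (lt_mem_nhds hp)).exists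

section Quantile

variable {Ω : Type*} [MeasurableSpace Ω] {P : Measure Ω} [IsProbabilityMeasure P] {X : Ω → ℝ}
  {p z : ℝ}

lemma quantile_eq_sInf_cdf (hX : Measurable X) (p : ℝ) :
    quantile P X p = sInf {z | p < cdf (P.map X) z} := by
  have := Measure.isProbabilityMeasure_map (μ := P) hX.aemeasurable
  simp only [quantile, cdf_eq_real, map_measureReal_apply hX measurableSet_Iic]
  rfl

lemma quantile_le_of_lt_cdf (hX : Measurable X) (hp : 0 < p) (h : p < cdf (P.map X) z) :
    quantile P X p ≤ z := by
  rw [quantile_eq_sInf_cdf hX]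
  exact csInf_le (bddBelow_setOf_lt_cdf _ hp) h

lemma le_cdf_of_quantile_le (hX : Measurable X) (hp : p < 1) (h : quantile P X p ≤ z) :
    p ≤ cdf (P.map X) z := by
  rw [quantile_eq_sInf_cdf hX] at h
  have hright : ∀ z' ∈ Ioi z, p < cdf (P.map X) z' := fun z' hz' => by
    obtain ⟨w, hw, hwz⟩ := exists_lt_of_csInf_lt (nonempty_setOf_lt_cdf _ hp) (h.trans_lt hz')
    exact hw.trans_le (monotone_cdf _ hwz.le)
  exact ge_of_tendsto (((cdf (P.map X)).right_continuous z).mono Ioi_subset_Ici_self)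
    (eventually_nhdsWithin_of_forall fun z' hz' => (hright z' hz').le)

lemma monotoneOn_quantile (hX : Measurable X) : MonotoneOn (quantile P X) (Ioo 0 1) := by
  intro p hp q hq hpq
  simp only [quantile_eq_sInf_cdf hX]
  exact csInf_le_csInf (bddBelow_setOf_lt_cdf _ hp.1) (nonempty_setOf_lt_cdf _ hq.2)
    fun z hz => hpq.trans_lt hz

lemma volume_Ioo_inter_setOf_quantile_le (hX : Measurable X) (z : ℝ) :
    volume (Ioo 0 1 ∩ {p | quantile P X p ≤ z}) = ENNReal.ofReal (cdf (P.map X) z) := by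
  apply le_antisymm
  · calc _ ≤ volume (Ioc 0 (cdf (P.map X) z)) :=
          measure_mono fun p hp => ⟨hp.1.1, le_cdf_of_quantile_le hX hp.1.2 hp.2⟩
      _ = _ := by rw [Real.volume_Ioc, sub_zero]
  · calc _ = volume (Ioo 0 (cdf (P.map X) z)) := by rw [Real.volume_Ioo, sub_zero]
      _ ≤ volume (Ioo 0 1 ∩ {p | quantile P X p ≤ z}) := measure_mono fun p hp =>
          ⟨⟨hp.1, hp.2.trans_le (cdf_le_one _ z)⟩, quantile_le_of_lt_cdf hX hp.1 hp.2⟩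

instance : IsProbabilityMeasure (Measure.comap ((↑) : Ioo (0 : ℝ) 1 → ℝ) volume) :=
  ⟨by rw [comap_subtype_coe_apply measurableSet_Ioo, image_univ, Subtype.range_coe,
    Real.volume_Ioo]; norm_num⟩

lemma monotone_quantile_comp_val (hX : Measurable X) :
    Monotone fun u : Ioo (0 : ℝ) 1 => quantile P X u :=
  fun u v huv => monotoneOn_quantile hX u.2 v.2 huv

lemma map_quantile_comp_val (hX : Measurable X) :
    (Measure.comap ((↑) : Ioo (0 : ℝ) 1 → ℝ) volume).map
      (fun u : Ioo (0 : ℝ) 1 => quantile P X u) = P.map X := by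
  have := Measure.isProbabilityMeasure_map (μ := P) hX.aemeasurable
  refine Measure.ext_of_Iic _ _ fun z => ?_
  rw [Measure.map_apply (monotone_quantile_comp_val hX).measurable measurableSet_Iic,
    comap_subtype_coe_apply measurableSet_Ioo]
  change volume (Subtype.val '' (Subtype.val ⁻¹' {p | quantile P X p ≤ z})) = _
  rw [Subtype.image_preimage_coe, volume_Ioo_inter_setOf_quantile_le hX, ofReal_cdf]

end Quantile

/-- Hardy–Littlewood upper bound: `sup_{Y ~ μ} E[XY] = ∫_0^1 Q_X(p) Q_μ(p) dp`, the
supremum being attained by any `Y ~ μ` comonotonic with `X`. -/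
theorem hardy_littlewood_upper {Ω : Type*} [MeasurableSpace Ω] (P : Measure Ω)
    [IsProbabilityMeasure P] (X : Ω → ℝ) (hX : Measurable X)
    (μ : Measure ℝ) [IsProbabilityMeasure μ]
    (hI : IntegrableOn (fun p => quantile P X p * quantileM μ p) (Set.Ioo 0 1) volume) :
    (∀ Y : Ω → ℝ, Measurable Y → P.map Y = μ →
        Integrable (fun ω => X ω * Y ω) P →
        ∫ ω, X ω * Y ω ∂P ≤ ∫ p in Set.Ioo (0:ℝ) 1, quantile P X p * quantileM μ p) ∧
    (∀ Y : Ω → ℝ, Measurable Y → P.map Y = μ → Comonotone P X Y →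
        Integrable (fun ω => X ω * Y ω) P →
        ∫ ω, X ω * Y ω ∂P = ∫ p in Set.Ioo (0:ℝ) 1, quantile P X p * quantileM μ p) := by
  set U := Measure.comap ((↑) : Ioo (0 : ℝ) 1 → ℝ) volume
  set X' : Ioo (0 : ℝ) 1 → ℝ := fun u => quantile P X u
  set Y' : Ioo (0 : ℝ) 1 → ℝ := fun u => quantileM μ u
  have hX' : Monotone X' := monotone_quantile_comp_val hX
  have hY' : Monotone Y' := monotone_quantile_comp_val measurable_id
  have hXX' : P.map X = U.map X' := (map_quantile_comp_val hX).symm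
  have hμ : U.map Y' = μ := (map_quantile_comp_val measurable_id).trans Measure.map_id
  have hXY' : Integrable (fun u => X' u * Y' u) U :=
    (integrableOn_iff_comap_subtypeVal measurableSet_Ioo).1 hI
  rw [← integral_subtype_comap measurableSet_Ioo]
  exact ⟨fun Y hY hYμ hXY => integral_mul_le_of_comonotone hX hY hX'.measurable hY'.measurable
      hXX' (hYμ.trans hμ.symm) (hX'.comonotone U hY') hXY hXY',
    fun Y hY hYμ hco hXY => integral_mul_eq_of_comonotone hX hY hX'.measurable hY'.measurable
      hXX' (hYμ.trans hμ.symm) hco (hX'.comonotone U hY') hXY hXY'⟩
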